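/- arXiv:1510.08765 — 2 statements merged into one kernel-verified Lean document; each statement's English description precedes it below -/
import Mathlib

section
/- For all real l and λ > 0, the integral ∫₀^∞ (1/√(2πv))·exp(−l²/(2v))·(λ²/2)·exp(−λ²v/2) dv equals (λ/2)·exp(−λ|l|). -/
/-!
Substituting `v = 2 u ^ 2` and completing the square,
`l ^ 2 / (4 u ^ 2) + λ ^ 2 u ^ 2 = λ |l| + (λ u - |l| / (2 u)) ^ 2`, turns the integral into
`λ ^ 2 / √π · exp (-λ |l|) · ∫₀^∞ exp (-(λ u - |l| / (2 u)) ^ 2) du`. The last integral is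
`√π / (2 λ)` by the Cauchy–Schlömilch transformation: for `F` even and integrable and `c, d > 0`,
the substitution `t = c u - d / u` gives `∫ F = ∫₀^∞ (c + d / u ^ 2) F (c u - d / u) du`, and the
inversion `u ↦ d / (c u)` shows that the `d / u ^ 2` part equals the `c` part, so
`∫₀^∞ F (c u - d / u) du = (2 c)⁻¹ ∫ F`.
-/

open MeasureTheory Real Set

section

variable {E : Type*} [NormedAddCommGroup E] [NormedSpace ℝ E]

lemma image_div_Ioi_zero {k : ℝ} (hk : 0 < k) : (k / ·) '' Ioi (0 : ℝ) = Ioi 0 := by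
  have hinv : Function.LeftInverse (k / ·) (k / · : ℝ → ℝ) := fun u ↦ div_div_cancel₀ hk.ne'
  rw [image_eq_preimage_of_inverse hinv hinv]
  ext u
  simp [div_pos_iff_of_pos_left hk]

lemma injOn_div_Ioi_zero {k : ℝ} (hk : 0 < k) : InjOn (k / · : ℝ → ℝ) (Ioi 0) :=
  (Function.LeftInverse.injective fun _ ↦ div_div_cancel₀ hk.ne').injOn

lemma hasDerivWithinAt_div_Ioi_zero {k : ℝ} {u : ℝ} (hu : u ∈ Ioi (0 : ℝ)) :
    HasDerivWithinAt (k / ·) (-(k / u ^ 2)) (Ioi 0) u := by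
  simpa [div_eq_mul_inv] using ((hasDerivAt_inv (ne_of_gt hu)).const_mul k).hasDerivWithinAt

theorem integral_Ioi_comp_div (G : ℝ → E) {k : ℝ} (hk : 0 < k) :
    ∫ u in Ioi 0, (k / u ^ 2) • G (k / u) = ∫ u in Ioi 0, G u := by
  conv_rhs => rw [← image_div_Ioi_zero hk, integral_image_eq_integral_abs_deriv_smul
    measurableSet_Ioi (fun _ ↦ hasDerivWithinAt_div_Ioi_zero) (injOn_div_Ioi_zero hk)]
  refine setIntegral_congr_fun measurableSet_Ioi fun u (hu : 0 < u) ↦ ?_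
  rw [abs_neg, abs_of_pos (by positivity)]

theorem integrableOn_Ioi_comp_div_iff (G : ℝ → E) {k : ℝ} (hk : 0 < k) :
    IntegrableOn (fun u ↦ (k / u ^ 2) • G (k / u)) (Ioi 0) ↔ IntegrableOn G (Ioi 0) := by
  conv_rhs => rw [← image_div_Ioi_zero hk, integrableOn_image_iff_integrableOn_abs_deriv_smul
    measurableSet_Ioi (fun _ ↦ hasDerivWithinAt_div_Ioi_zero) (injOn_div_Ioi_zero hk)]
  refine integrableOn_congr_fun (fun u (hu : 0 < u) ↦ ?_) measurableSet_Ioi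
  rw [abs_neg, abs_of_pos (by positivity)]

theorem integral_Ioi_comp_two_mul_sq (g : ℝ → E) :
    ∫ u in Ioi 0, (4 * u) • g (2 * u ^ 2) = ∫ v in Ioi 0, g v := by
  have himg : (fun u : ℝ ↦ 2 * u ^ 2) '' Ioi 0 = Ioi 0 := by
    ext v
    constructor
    · rintro ⟨u, hu : 0 < u, rfl⟩
      exact mem_Ioi.2 (by positivity)
    · intro (hv : 0 < v)
      refine ⟨√(v / 2), sqrt_pos.2 (half_pos hv), ?_⟩
      simp only [sq_sqrt (half_pos hv).le]
      ring
  have hinj : InjOn (fun u : ℝ ↦ 2 * u ^ 2) (Ioi 0) := fun a ha b hb hab ↦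
    (pow_left_inj₀ (le_of_lt ha) (le_of_lt hb) two_ne_zero).1 (by simpa using hab)
  have hderiv (u : ℝ) : HasDerivWithinAt (fun u ↦ 2 * u ^ 2) (4 * u) (Ioi 0) u :=
    ((hasDerivAt_pow 2 u).const_mul 2).hasDerivWithinAt.congr_deriv (by norm_num; ring)
  conv_rhs => rw [← himg, integral_image_eq_integral_abs_deriv_smul measurableSet_Ioi
    (fun u _ ↦ hderiv u) hinj]
  refine setIntegral_congr_fun measurableSet_Ioi fun u (hu : 0 < u) ↦ ?_
  rw [abs_of_pos (by positivity : (0 : ℝ) < 4 * u)]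

variable {c d : ℝ}

lemma hasDerivAt_mul_sub_div (c d : ℝ) {u : ℝ} (hu : u ≠ 0) :
    HasDerivAt (fun u ↦ c * u - d / u) (c + d / u ^ 2) u := by
  have h := ((hasDerivAt_id u).const_mul c).sub ((hasDerivAt_inv hu).const_mul d)
  simp only [id, mul_one, mul_neg, sub_neg_eq_add, ← div_eq_mul_inv] at h
  exact h

lemma strictMonoOn_mul_sub_div (hc : 0 < c) (hd : 0 ≤ d) :
    StrictMonoOn (fun u ↦ c * u - d / u) (Ioi 0) := fun a (ha : 0 < a) b _ hab ↦ by
  linarith [mul_lt_mul_of_pos_left hab hc, div_le_div_of_nonneg_left hd ha hab.le]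

lemma image_mul_sub_div_Ioi_zero (hc : 0 < c) (hd : 0 < d) :
    (fun u ↦ c * u - d / u) '' Ioi 0 = univ := by
  refine eq_univ_of_forall fun t ↦ ?_
  -- the positive root of `c u ^ 2 - t u - d = 0`
  set s := √(t ^ 2 + 4 * c * d)
  have hs : s ^ 2 = t ^ 2 + 4 * c * d := sq_sqrt (by positivity)
  have hts : 0 < t + s := by
    have : |t| < s := by
      rw [← sqrt_sq_eq_abs]
      exact sqrt_lt_sqrt (sq_nonneg t) (by nlinarith)
    linarith [neg_le_abs t]
  refine ⟨(t + s) / (2 * c), div_pos hts (by positivity), ?_⟩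
  field_simp
  linear_combination hs

lemma mul_sub_div_comp_div (hc : c ≠ 0) (hd : d ≠ 0) (u : ℝ) :
    c * (d / c / u) - d / (d / c / u) = -(c * u - d / u) := by
  rcases eq_or_ne u 0 with rfl | hu
  · simp
  · field_simp
    ring

lemma hasDerivWithinAt_mul_sub_div_Ioi_zero (c d : ℝ) {u : ℝ} (hu : u ∈ Ioi (0 : ℝ)) :
    HasDerivWithinAt (fun u ↦ c * u - d / u) (c + d / u ^ 2) (Ioi 0) u :=
  (hasDerivAt_mul_sub_div c d (ne_of_gt hu)).hasDerivWithinAt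

lemma abs_add_div_sq_smul (hc : 0 < c) (hd : 0 ≤ d) (f : ℝ → E) :
    EqOn (fun u ↦ |c + d / u ^ 2| • f u) (fun u ↦ (c + d / u ^ 2) • f u) (Ioi 0) :=
  fun u (hu : 0 < u) ↦ by simp only [abs_of_pos (by positivity : 0 < c + d / u ^ 2)]

theorem integral_eq_integral_Ioi_add_div_sq_smul_comp_mul_sub_div (hc : 0 < c) (hd : 0 < d)
    (F : ℝ → E) : ∫ t, F t = ∫ u in Ioi 0, (c + d / u ^ 2) • F (c * u - d / u) := by
  rw [← setIntegral_univ, ← image_mul_sub_div_Ioi_zero hc hd,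
    integral_image_eq_integral_abs_deriv_smul measurableSet_Ioi
      (fun _ ↦ hasDerivWithinAt_mul_sub_div_Ioi_zero c d) (strictMonoOn_mul_sub_div hc hd.le).injOn,
    setIntegral_congr_fun measurableSet_Ioi (abs_add_div_sq_smul hc hd.le _)]

theorem integrable_iff_integrableOn_Ioi_add_div_sq_smul_comp_mul_sub_div (hc : 0 < c)
    (hd : 0 < d) (F : ℝ → E) :
    Integrable F ↔ IntegrableOn (fun u ↦ (c + d / u ^ 2) • F (c * u - d / u)) (Ioi 0) := by
  rw [← integrableOn_univ, ← image_mul_sub_div_Ioi_zero hc hd,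
    integrableOn_image_iff_integrableOn_abs_deriv_smul measurableSet_Ioi
      (fun _ ↦ hasDerivWithinAt_mul_sub_div_Ioi_zero c d) (strictMonoOn_mul_sub_div hc hd.le).injOn]
  exact integrableOn_congr_fun (abs_add_div_sq_smul hc hd.le _) measurableSet_Ioi

theorem integrableOn_Ioi_comp_mul_sub_div {F : ℝ → E} (hF : Integrable F)
    (hc : 0 < c) (hd : 0 < d) : IntegrableOn (fun u ↦ F (c * u - d / u)) (Ioi 0) := by
  have hweighted := (integrable_iff_integrableOn_Ioi_add_div_sq_smul_comp_mul_sub_div hc hd F).1 hF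
  have hweight : ContinuousOn (fun u : ℝ ↦ (c + d / u ^ 2)⁻¹) (Ioi 0) :=
    ContinuousOn.inv₀ (by fun_prop (disch := exact fun u (hu : 0 < u) ↦ by positivity))
      fun u (hu : 0 < u) ↦ by positivity
  -- measurability is recovered by dividing out the continuous weight `c + d / u ^ 2 ≥ c`
  have hmeas : AEStronglyMeasurable (fun u ↦ F (c * u - d / u)) (volume.restrict (Ioi 0)) := by
    refine ((hweight.aestronglyMeasurable measurableSet_Ioi).smul
      hweighted.aestronglyMeasurable).congr ?_
    filter_upwards [ae_restrict_mem measurableSet_Ioi] with u (hu : 0 < u)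
    rw [Pi.smul_apply', smul_smul, inv_mul_cancel₀ (by positivity), one_smul]
  refine (hweighted.norm.const_mul c⁻¹).mono' hmeas ?_
  filter_upwards [ae_restrict_mem measurableSet_Ioi] with u (hu : 0 < u)
  rw [norm_smul, norm_of_nonneg (by positivity)]
  calc ‖F (c * u - d / u)‖ = c⁻¹ * (c * ‖F (c * u - d / u)‖) := by field_simp
    _ ≤ c⁻¹ * ((c + d / u ^ 2) * ‖F (c * u - d / u)‖) := by
      gcongr
      exact le_add_of_nonneg_right (by positivity)

theorem integral_Ioi_comp_mul_sub_div {F : ℝ → E} (hF : Integrable F) (hFe : Function.Even F)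
    (hc : 0 < c) (hd : 0 < d) :
    ∫ u in Ioi 0, F (c * u - d / u) = (2 * c)⁻¹ • ∫ t, F t := by
  set H : ℝ → E := fun u ↦ F (c * u - d / u)
  have hH_int : IntegrableOn H (Ioi 0) := integrableOn_Ioi_comp_mul_sub_div hF hc hd
  -- `u ↦ (d / c) / u` reverses the sign of `c u - d / u`, which `F` does not see
  have hrefl (u : ℝ) : H (d / c / u) = H u := by
    simp only [H, mul_sub_div_comp_div hc.ne' hd.ne', hFe _]
  have hH_refl : ∫ u in Ioi 0, (d / c / u ^ 2) • H u = ∫ u in Ioi 0, H u := by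
    simpa only [hrefl] using integral_Ioi_comp_div H (div_pos hd hc)
  have hH_refl_int : IntegrableOn (fun u ↦ (d / c / u ^ 2) • H u) (Ioi 0) := by
    simpa only [hrefl] using (integrableOn_Ioi_comp_div_iff H (div_pos hd hc)).2 hH_int
  have hsplit : ∀ u ∈ Ioi (0 : ℝ), (c + d / u ^ 2) • H u = c • H u + c • (d / c / u ^ 2) • H u :=
    fun u _ ↦ by rw [smul_smul, ← add_smul]; field_simp
  rw [integral_eq_integral_Ioi_add_div_sq_smul_comp_mul_sub_div hc hd,
    setIntegral_congr_fun measurableSet_Ioi hsplit,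
    integral_add (f := fun u ↦ c • H u) (g := fun u ↦ c • (d / c / u ^ 2) • H u)
      (hH_int.smul c) (hH_refl_int.smul c), integral_smul, integral_smul, hH_refl,
    ← add_smul, smul_smul, ← two_mul, inv_mul_cancel₀ (by positivity), one_smul]

theorem integral_Ioi_exp_neg_sq_mul_sub_div (hc : 0 < c) (hd : 0 ≤ d) :
    ∫ u in Ioi 0, exp (-(c * u - d / u) ^ 2) = √π / (2 * c) := by
  rcases hd.eq_or_lt with rfl | hd
  · simp only [zero_div, sub_zero, mul_pow, ← neg_mul]
    rw [integral_gaussian_Ioi, sqrt_div pi_pos.le, sqrt_sq hc.le]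
    ring
  · have hG := integrable_exp_neg_mul_sq (b := 1) one_pos
    simp only [neg_mul, one_mul] at hG
    rw [integral_Ioi_comp_mul_sub_div hG (fun t ↦ by simp) hc hd]
    have := integral_gaussian 1
    simp only [neg_mul, one_mul, div_one] at this
    rw [this, smul_eq_mul, inv_mul_eq_div]

end

lemma exp_neg_sq_div_mul_exp_neg_sq_mul (lam l : ℝ) {u : ℝ} (hu : u ≠ 0) :
    exp (-l ^ 2 / (2 * (2 * u ^ 2))) * exp (-lam ^ 2 * (2 * u ^ 2) / 2) =
      exp (-lam * |l|) * exp (-(lam * u - |l| / 2 / u) ^ 2) := by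
  rw [← exp_add, ← exp_add, ← sq_abs l]
  congr 1
  field_simp
  ring

theorem stmt_2 (lam l : ℝ) (hlam : 0 < lam) :
    ∫ v in Set.Ioi (0 : ℝ),
        (1 / Real.sqrt (2 * Real.pi * v)) * Real.exp (-l ^ 2 / (2 * v)) *
          (lam ^ 2 / 2) * Real.exp (-lam ^ 2 * v / 2) =
      (lam / 2) * Real.exp (-lam * |l|) := by
  rw [← integral_Ioi_comp_two_mul_sq]
  have hintegrand : ∀ u ∈ Ioi (0 : ℝ), (4 * u) • ((1 / √(2 * π * (2 * u ^ 2))) *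
      exp (-l ^ 2 / (2 * (2 * u ^ 2))) * (lam ^ 2 / 2) * exp (-lam ^ 2 * (2 * u ^ 2) / 2)) =
      lam ^ 2 / √π * exp (-lam * |l|) * exp (-(lam * u - |l| / 2 / u) ^ 2) := by
    intro u (hu : 0 < u)
    have hsqrt : √(2 * π * (2 * u ^ 2)) = 2 * u * √π := by
      rw [show 2 * π * (2 * u ^ 2) = (2 * u) ^ 2 * π by ring, sqrt_mul (sq_nonneg _),
        sqrt_sq (by positivity)]
    calc (4 * u) • ((1 / √(2 * π * (2 * u ^ 2))) * exp (-l ^ 2 / (2 * (2 * u ^ 2))) *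
          (lam ^ 2 / 2) * exp (-lam ^ 2 * (2 * u ^ 2) / 2))
        = lam ^ 2 / √π * (exp (-l ^ 2 / (2 * (2 * u ^ 2))) *
            exp (-lam ^ 2 * (2 * u ^ 2) / 2)) := by
          rw [smul_eq_mul, hsqrt]
          field_simp
          norm_num
      _ = _ := by rw [exp_neg_sq_div_mul_exp_neg_sq_mul lam l hu.ne', mul_assoc]
  rw [setIntegral_congr_fun measurableSet_Ioi hintegrand, integral_const_mul,
    integral_Ioi_exp_neg_sq_mul_sub_div hlam (by positivity)]
  field_simp
end

section
/- If Z₁, Z₂, Z₃, Z₄ are independent standard normal random variables, then the determinant Z₁Z₃ − Z₂Z₄ of a 2×2 matrix with these entries has the standard Laplace distribution with density (1/2)e^{−|x|}. -/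
/-!
The map `(a, b) ↦ ((a + b) / √2, (a - b) / √2)` is orthogonal, so it preserves the standard
Gaussian measure on the plane, and it turns `ab` into `u² / 2 - v² / 2`. Applied to the independent
pairs `(Z₁, Z₃)` and `(Z₂, Z₄)`, this writes the law of `Z₁Z₃ - Z₂Z₄` as a convolution of four laws
of the form `±U² / 2`, which regroups as the law of `E - E'` with `E`, `E'` independent copies of
`(U² + V²) / 2`. In polar coordinates `(U² + V²) / 2` is exponential with rate 1, and the difference
of two independent `Exp(1)` variables has density `e^{-|x|} / 2`.
-/

open MeasureTheory ProbabilityTheory Real Set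
open scoped ENNReal

theorem LinearMap.measurePreserving_of_abs_det_eq_one {E : Type*} [NormedAddCommGroup E]
    [NormedSpace ℝ E] [MeasurableSpace E] [BorelSpace E] [FiniteDimensional ℝ E]
    (μ : Measure E) [μ.IsAddHaarMeasure] (f : E →ₗ[ℝ] E) (hf : |LinearMap.det f| = 1) :
    MeasurePreserving f μ μ where
  measurable := f.continuous_of_finiteDimensional.measurable
  map_eq := by
    rw [Measure.map_linearMap_addHaar_eq_smul_addHaar μ (abs_ne_zero.1 (hf ▸ one_ne_zero)),
      abs_inv, hf]
    simp

theorem MeasureTheory.MeasurePreserving.map_withDensity_comp {α β : Type*} [MeasurableSpace α]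
    [MeasurableSpace β] {μ : Measure α} {ν : Measure β} {f : α → β} (hf : MeasurePreserving f μ ν)
    {ρ : β → ℝ≥0∞} (hρ : Measurable ρ) :
    (μ.withDensity (ρ ∘ f)).map f = ν.withDensity ρ := by
  ext s hs
  rw [Measure.map_apply hf.measurable hs, withDensity_apply _ (hf.measurable hs),
    withDensity_apply _ hs]
  exact hf.setLIntegral_comp_preimage hs hρ

theorem MeasureTheory.Measure.map_prod_add_eq_conv {α β M : Type*} [MeasurableSpace α]
    [MeasurableSpace β] [AddMonoid M] [MeasurableSpace M] [MeasurableAdd₂ M]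
    (μ : Measure α) (ν : Measure β) [SFinite μ] [SFinite ν] {f : α → M} {g : β → M}
    (hf : Measurable f) (hg : Measurable g) :
    (μ.prod ν).map (fun p => f p.1 + g p.2) = μ.map f ∗ ν.map g := by
  rw [Measure.conv, Measure.map_prod_map _ _ hf hg, Measure.map_map measurable_add (hf.prodMap hg)]
  rfl

theorem MeasureTheory.Measure.conv_conv_conv_comm {M : Type*} [AddCommMonoid M]
    [MeasurableSpace M] [MeasurableAdd₂ M] (μ₁ μ₂ μ₃ μ₄ : Measure M) [SFinite μ₂] [SFinite μ₃]
    [SFinite μ₄] : (μ₁ ∗ μ₂) ∗ (μ₃ ∗ μ₄) = (μ₁ ∗ μ₃) ∗ (μ₂ ∗ μ₄) := by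
  rw [conv_assoc, ← conv_assoc μ₂, conv_comm μ₂ μ₃, conv_assoc μ₃, ← conv_assoc μ₁]

theorem ProbabilityTheory.IndepFun.map_comp_prodMk {Ω α β γ : Type*} [MeasurableSpace Ω]
    [MeasurableSpace α] [MeasurableSpace β] [MeasurableSpace γ] {μ : Measure Ω}
    [IsFiniteMeasure μ] {X : Ω → α} {Y : Ω → β} (h : IndepFun X Y μ) (hX : Measurable X)
    (hY : Measurable Y) {F : α × β → γ} (hF : Measurable F) :
    μ.map (fun ω => F (X ω, Y ω)) = ((μ.map X).prod (μ.map Y)).map F := by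
  change μ.map (F ∘ fun ω => (X ω, Y ω)) = _
  rw [← Measure.map_map hF (hX.prodMk hY),
    (indepFun_iff_map_prod_eq_prod_map_map hX.aemeasurable hY.aemeasurable).1 h]

theorem image_half_sq_Ioi : (fun r : ℝ => r ^ 2 / 2) '' Ioi 0 = Ioi 0 := by
  ext s
  simp only [mem_image, mem_Ioi]
  constructor
  · rintro ⟨r, hr, rfl⟩
    positivity
  · intro hs
    refine ⟨√(2 * s), by positivity, ?_⟩
    rw [Real.sq_sqrt (by positivity)]
    ring

theorem lintegral_Ioi_mul_comp_half_sq (G : ℝ → ℝ≥0∞) :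
    ∫⁻ r in Ioi (0 : ℝ), ENNReal.ofReal r * G (r ^ 2 / 2) = ∫⁻ s in Ioi 0, G s := by
  have hderiv (r : ℝ) : HasDerivWithinAt (fun r : ℝ => r ^ 2 / 2) r (Ioi 0) r := by
    simpa using ((hasDerivAt_pow 2 r).div_const 2).hasDerivWithinAt
  have hinj : InjOn (fun r : ℝ => r ^ 2 / 2) (Ioi 0) := fun r hr r' hr' h => by
    simpa [le_of_lt (mem_Ioi.1 hr), le_of_lt (mem_Ioi.1 hr')] using h
  calc ∫⁻ r in Ioi (0 : ℝ), ENNReal.ofReal r * G (r ^ 2 / 2)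
      = ∫⁻ r in Ioi (0 : ℝ), ENNReal.ofReal |r| * G (r ^ 2 / 2) :=
        setLIntegral_congr_fun measurableSet_Ioi fun r hr => by rw [abs_of_pos hr]
    _ = ∫⁻ s in (fun r : ℝ => r ^ 2 / 2) '' Ioi 0, G s :=
        (lintegral_image_eq_lintegral_abs_deriv_mul measurableSet_Ioi (fun r _ => hderiv r)
          hinj G).symm
    _ = ∫⁻ s in Ioi 0, G s := by rw [image_half_sq_Ioi]

theorem lintegral_comp_half_sq_add_sq {G : ℝ → ℝ≥0∞} (hG : Measurable G) :
    ∫⁻ p : ℝ × ℝ, G ((p.1 ^ 2 + p.2 ^ 2) / 2) = ENNReal.ofReal (2 * π) * ∫⁻ s in Ioi 0, G s := by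
  have hpolar (p : ℝ × ℝ) :
      ENNReal.ofReal p.1 • G (((polarCoord.symm p).1 ^ 2 + (polarCoord.symm p).2 ^ 2) / 2) =
        ENNReal.ofReal p.1 * G (p.1 ^ 2 / 2) * 1 := by
    have := sin_sq_add_cos_sq p.2
    simp only [polarCoord_symm_apply, smul_eq_mul, mul_one]
    congr 3
    linear_combination p.1 ^ 2 * this
  rw [← lintegral_comp_polarCoord_symm, lintegral_congr hpolar, polarCoord_target,
    Measure.volume_eq_prod, ← Measure.prod_restrict,
    lintegral_prod_mul (f := fun r => ENNReal.ofReal r * G (r ^ 2 / 2)) (g := fun _ => 1)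
      (by fun_prop) aemeasurable_const, lintegral_Ioi_mul_comp_half_sq, setLIntegral_one,
    Real.volume_Ioo, mul_comm]
  ring_nf

theorem lintegral_expMeasure (r : ℝ) {φ : ℝ → ℝ≥0∞} (hφ : Measurable φ) :
    ∫⁻ s, φ s ∂(expMeasure r) = ∫⁻ s in Ioi 0, ENNReal.ofReal (r * exp (-(r * s))) * φ s := by
  rw [expMeasure, gammaMeasure, lintegral_withDensity_eq_lintegral_mul _
    (f := gammaPDF 1 r) (measurable_gammaPDFReal 1 r).ennreal_ofReal hφ,
    setLIntegral_congr Ioi_ae_eq_Ici, ← lintegral_indicator measurableSet_Ici]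
  congr 1
  ext s
  by_cases hs : 0 ≤ s <;> simp [hs, gammaPDF, gammaPDFReal]

theorem exponentialPDF_mul_exponentialPDF_sub {r : ℝ} (hr : 0 ≤ r) (x y : ℝ) :
    exponentialPDF r y * exponentialPDF r (y - x) =
      (Ici (max 0 x)).indicator
        (fun y => ENNReal.ofReal (r ^ 2 * exp (r * x) * exp (-(2 * r) * y))) y := by
  simp only [exponentialPDF_eq, indicator, mem_Ici, max_le_iff, sub_nonneg]
  by_cases h : 0 ≤ y ∧ x ≤ y
  · have key : exp (-(r * y)) * exp (-(r * (y - x))) = exp (r * x) * exp (-(2 * r) * y) := by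
      rw [← exp_add, ← exp_add]
      ring_nf
    rw [if_pos h.1, if_pos h.2, if_pos h, ← ENNReal.ofReal_mul (by positivity)]
    congr 1
    linear_combination r ^ 2 * key
  · rw [if_neg h]
    rcases not_and_or.1 h with h | h <;> simp [h]

theorem lintegral_exponentialPDF_mul_sub {r : ℝ} (hr : 0 < r) (x : ℝ) :
    ∫⁻ y, exponentialPDF r y * exponentialPDF r (y - x) =
      ENNReal.ofReal (r / 2 * exp (-(r * |x|))) := by
  simp_rw [exponentialPDF_mul_exponentialPDF_sub hr.le x]
  rw [lintegral_indicator measurableSet_Ici, ← setLIntegral_congr Ioi_ae_eq_Ici,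
    ← ofReal_integral_eq_lintegral_ofReal
      ((integrableOn_exp_mul_Ioi (by linarith) _).const_mul _) (ae_of_all _ fun _ => by positivity),
    integral_const_mul, integral_exp_mul_Ioi (by linarith)]
  congr 1
  rcases le_total 0 x with hx | hx
  · rw [max_eq_right hx, abs_of_nonneg hx]
    field_simp
    rw [mul_assoc, ← exp_add]
    ring_nf
  · rw [max_eq_left hx, abs_of_nonpos hx]
    field_simp
    ring_nf
    simp

theorem expMeasure_conv_map_neg {r : ℝ} (hr : 0 < r) :
    expMeasure r ∗ (expMeasure r).map Neg.neg =
      volume.withDensity (fun x => ENNReal.ofReal (r / 2 * exp (-(r * |x|)))) := by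
  have he : Measurable (exponentialPDF r) := (measurable_exponentialPDFReal r).ennreal_ofReal
  have hneg : (expMeasure r).map Neg.neg = volume.withDensity (exponentialPDF r ∘ Neg.neg) := by
    rw [← (Measure.measurePreserving_neg volume).map_withDensity_comp (he.comp measurable_neg),
      Function.comp_assoc, show (Neg.neg ∘ Neg.neg : ℝ → ℝ) = id from funext neg_neg,
      Function.comp_id]
    rfl
  rw [hneg, show expMeasure r = volume.withDensity (exponentialPDF r) from rfl,
    conv_withDensity_eq_lconvolution he (he.comp measurable_neg)]
  congr 1
  ext x
  simp only [lconvolution_def, Function.comp_apply, neg_add_eq_sub, neg_sub]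
  exact lintegral_exponentialPDF_mul_sub hr x

section StandardGaussian

local notation "γ" => gaussianReal 0 1

local notation "γ₂" => Measure.prod γ γ

noncomputable def hadamard : ℝ × ℝ →ₗ[ℝ] ℝ × ℝ :=
  Matrix.toLin (Module.Basis.finTwoProd ℝ) (Module.Basis.finTwoProd ℝ)
    !![(√2)⁻¹, (√2)⁻¹; (√2)⁻¹, -(√2)⁻¹]

theorem hadamard_apply (p : ℝ × ℝ) :
    hadamard p = ((p.1 + p.2) / √2, (p.1 - p.2) / √2) := by
  rw [hadamard, Matrix.toLin_finTwoProd_apply]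
  ext <;> ring

theorem measurePreserving_hadamard :
    MeasurePreserving hadamard (volume : Measure (ℝ × ℝ)) volume := by
  refine hadamard.measurePreserving_of_abs_det_eq_one _ ?_
  rw [hadamard, LinearMap.det_toLin, Matrix.det_fin_two_of, mul_neg, ← mul_inv,
    Real.mul_self_sqrt zero_le_two]
  norm_num

theorem hadamard_fst_sq_add_snd_sq (p : ℝ × ℝ) :
    (hadamard p).1 ^ 2 + (hadamard p).2 ^ 2 = p.1 ^ 2 + p.2 ^ 2 := by
  rw [hadamard_apply]
  field_simp
  rw [Real.sq_sqrt zero_le_two]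
  ring

theorem hadamard_fst_mul_snd (p : ℝ × ℝ) :
    (hadamard p).1 * (hadamard p).2 = p.1 ^ 2 / 2 + -(p.2 ^ 2 / 2) := by
  rw [hadamard_apply, div_mul_div_comm, Real.mul_self_sqrt zero_le_two]
  ring

noncomputable def gaussianPlanePDF (p : ℝ × ℝ) : ℝ≥0∞ :=
  ENNReal.ofReal ((2 * π)⁻¹ * exp (-((p.1 ^ 2 + p.2 ^ 2) / 2)))

theorem measurable_gaussianPlanePDF : Measurable gaussianPlanePDF := by
  unfold gaussianPlanePDF; fun_prop

theorem gaussianReal_prod_eq_withDensity : γ₂ = volume.withDensity gaussianPlanePDF := by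
  rw [gaussianReal_of_var_ne_zero 0 one_ne_zero, prod_withDensity (measurable_gaussianPDF 0 1)
    (measurable_gaussianPDF 0 1), ← Measure.volume_eq_prod]
  congr 1
  ext p
  rw [gaussianPDF, gaussianPDF, ← ENNReal.ofReal_mul (gaussianPDFReal_nonneg _ _ _),
    gaussianPDFReal, gaussianPDFReal, gaussianPlanePDF, mul_mul_mul_comm, ← mul_inv,
    Real.mul_self_sqrt (by positivity), ← Real.exp_add]
  congr 3 <;> push_cast <;> ring

theorem map_hadamard_gaussianReal_prod : Measure.map hadamard γ₂ = γ₂ := by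
  have h : gaussianPlanePDF ∘ hadamard = gaussianPlanePDF := by
    ext p; simp only [Function.comp_apply, gaussianPlanePDF, hadamard_fst_sq_add_snd_sq]
  rw [gaussianReal_prod_eq_withDensity]
  nth_rewrite 1 [← h]
  exact measurePreserving_hadamard.map_withDensity_comp measurable_gaussianPlanePDF

theorem map_half_sq_add_sq_gaussianReal_prod :
    Measure.map (fun p => (p.1 ^ 2 + p.2 ^ 2) / 2) γ₂ = expMeasure 1 := by
  refine Measure.ext_of_lintegral _ fun φ hφ => ?_
  rw [lintegral_map hφ (by fun_prop), gaussianReal_prod_eq_withDensity,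
    lintegral_withDensity_eq_lintegral_mul _ measurable_gaussianPlanePDF (by fun_prop),
    lintegral_expMeasure 1 hφ]
  simp only [one_mul]
  change ∫⁻ p : ℝ × ℝ, (fun s => ENNReal.ofReal ((2 * π)⁻¹ * exp (-s)) * φ s)
    ((p.1 ^ 2 + p.2 ^ 2) / 2) = _
  rw [lintegral_comp_half_sq_add_sq (G := fun s => ENNReal.ofReal ((2 * π)⁻¹ * exp (-s)) * φ s)
    (by fun_prop), ← lintegral_const_mul' _ _ ENNReal.ofReal_ne_top]
  refine setLIntegral_congr_fun measurableSet_Ioi fun s _ => ?_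
  rw [← mul_assoc, ← ENNReal.ofReal_mul (by positivity), ← mul_assoc,
    mul_inv_cancel₀ (by positivity), one_mul]

theorem map_comp_hadamard_gaussianReal_prod {F : ℝ × ℝ → ℝ} (hF : Measurable F) :
    Measure.map F γ₂ = Measure.map (F ∘ hadamard) γ₂ := by
  rw [← Measure.map_map hF measurePreserving_hadamard.measurable, map_hadamard_gaussianReal_prod]

theorem map_mul_gaussianReal_prod :
    Measure.map (fun p => p.1 * p.2) γ₂ =
      Measure.map (fun x => x ^ 2 / 2) γ ∗ Measure.map (fun x => -(x ^ 2 / 2)) γ := by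
  rw [map_comp_hadamard_gaussianReal_prod (by fun_prop),
    ← Measure.map_prod_add_eq_conv _ _ (by fun_prop) (by fun_prop)]
  simp only [Function.comp_def, hadamard_fst_mul_snd]

theorem map_neg_mul_gaussianReal_prod :
    Measure.map (fun p => -(p.1 * p.2)) γ₂ =
      Measure.map (fun x => -(x ^ 2 / 2)) γ ∗ Measure.map (fun x => x ^ 2 / 2) γ := by
  rw [map_comp_hadamard_gaussianReal_prod (by fun_prop),
    ← Measure.map_prod_add_eq_conv _ _ (by fun_prop) (by fun_prop)]
  simp only [Function.comp_def, hadamard_fst_mul_snd]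
  congr 2; ext p; ring

theorem conv_map_half_sq_gaussianReal :
    Measure.map (fun x => x ^ 2 / 2) γ ∗ Measure.map (fun x => x ^ 2 / 2) γ = expMeasure 1 := by
  rw [← Measure.map_prod_add_eq_conv _ _ (by fun_prop) (by fun_prop),
    ← map_half_sq_add_sq_gaussianReal_prod]
  simp only [add_div]

theorem conv_map_neg_half_sq_gaussianReal :
    Measure.map (fun x => -(x ^ 2 / 2)) γ ∗ Measure.map (fun x => -(x ^ 2 / 2)) γ =
      (expMeasure 1).map Neg.neg := by
  rw [← Measure.map_prod_add_eq_conv _ _ (by fun_prop) (by fun_prop),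
    ← map_half_sq_add_sq_gaussianReal_prod, Measure.map_map measurable_neg (by fun_prop)]
  congr 1; ext p; simp only [Function.comp_apply]; ring

end StandardGaussian

theorem stmt_10 {Ω : Type*} [MeasurableSpace Ω] (μ : Measure Ω) [IsProbabilityMeasure μ]
    (Z : Fin 4 → Ω → ℝ) (hm : ∀ i, Measurable (Z i))
    (hd : ∀ i, Measure.map (Z i) μ = gaussianReal 0 1)
    (hind : iIndepFun Z μ) :
    Measure.map (fun ω => Z 0 ω * Z 2 ω - Z 1 ω * Z 3 ω) μ =
      volume.withDensity (fun x => ENNReal.ofReal ((1 / 2) * Real.exp (-|x|))) := by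
  have hindep : IndepFun (fun ω => Z 0 ω * Z 2 ω) (fun ω => -(Z 1 ω * Z 3 ω)) μ :=
    (hind.indepFun_prodMk_prodMk hm 0 2 1 3 (by decide) (by decide) (by decide) (by decide)).comp
      (measurable_fst.mul measurable_snd) (measurable_fst.mul measurable_snd).neg
  set a := (gaussianReal 0 1).map (fun x => x ^ 2 / 2)
  set b := (gaussianReal 0 1).map (fun x => -(x ^ 2 / 2))
  calc μ.map (fun ω => Z 0 ω * Z 2 ω - Z 1 ω * Z 3 ω)
      = μ.map (fun ω => Z 0 ω * Z 2 ω) ∗ μ.map (fun ω => -(Z 1 ω * Z 3 ω)) := by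
        rw [← hindep.map_add_eq_map_conv_map (by fun_prop) (by fun_prop)]
        simp only [sub_eq_add_neg]
        rfl
    _ = (a ∗ b) ∗ (b ∗ a) := by
        rw [(hind.indepFun (by decide : (0 : Fin 4) ≠ 2)).map_comp_prodMk (hm 0) (hm 2)
            (F := fun p => p.1 * p.2) (by fun_prop),
          (hind.indepFun (by decide : (1 : Fin 4) ≠ 3)).map_comp_prodMk (hm 1) (hm 3)
            (F := fun p => -(p.1 * p.2)) (by fun_prop),
          hd, hd, hd, hd, map_mul_gaussianReal_prod, map_neg_mul_gaussianReal_prod]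
    _ = (a ∗ a) ∗ (b ∗ b) := by rw [Measure.conv_comm b a, Measure.conv_conv_conv_comm]
    _ = expMeasure 1 ∗ (expMeasure 1).map Neg.neg := by
        rw [conv_map_half_sq_gaussianReal, conv_map_neg_half_sq_gaussianReal]
    _ = _ := by simpa using expMeasure_conv_map_neg one_pos
end
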